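/- Let λ be a weakly decreasing tuple of nonnegative integers of length n, α = λ + ρ_n, and let β ∈ Ω(α). Then every entry of the tuple β − ρ_n is a nonnegative integer, and P_{β−ρ_n}(x;t) = t^{l(β)} · P_λ(x;t) in F. -/

import Mathlib

open MvPolynomial Finset

noncomputable section

abbrev Rr : Type := MvPolynomial (Fin 2 ⊕ ℕ) ℚ

abbrev F : Type := FractionRing Rr

/-- The variable `q`. -/
def q : F := algebraMap Rr F (X (Sum.inl 0))

/-- The variable `t`. -/
def t : F := algebraMap Rr F (X (Sum.inl 1))

/-- `x k` is the variable `x_{k+1}` of the paper (0-indexed). -/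
def x (k : ℕ) : F := algebraMap Rr F (X (Sum.inr k))

/-- Substitution endomorphism of `F` induced by an injective map of variables. -/
def subF (g : Fin 2 ⊕ ℕ → Fin 2 ⊕ ℕ) (hg : Function.Injective g) : F →+* F :=
  IsFractionRing.lift (g := (algebraMap Rr F).comp (rename g).toRingHom)
    (by
      rw [RingHom.coe_comp]
      exact (IsFractionRing.injective Rr F).comp (rename_injective g hg))

def permNat (n : ℕ) (σ : Equiv.Perm (Fin n)) : ℕ → ℕ :=
  fun k => if h : k < n then (σ ⟨k, h⟩ : ℕ) else k

lemma permNat_inj (n : ℕ) (σ : Equiv.Perm (Fin n)) : Function.Injective (permNat n σ) := by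
  intro a b hab
  unfold permNat at hab
  split_ifs at hab with h1 h2 h2
  · have := σ.injective (Fin.val_injective hab)
    exact congrArg Fin.val this
  · have := (σ ⟨a, h1⟩).isLt; omega
  · have := (σ ⟨b, h2⟩).isLt; omega
  · exact hab

/-- The action of a permutation `σ ∈ S_n` on `F`, permuting `x_1, …, x_n`. -/
def pact (n : ℕ) (σ : Equiv.Perm (Fin n)) : F →+* F :=
  subF (Sum.map id (permNat n σ)) (Function.injective_id.sumMap (permNat_inj n σ))

def shiftNat (i : ℕ) : ℕ → ℕ := fun k => if k < i then k else k + 1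

lemma shiftNat_inj (i : ℕ) : Function.Injective (shiftNat i) := by
  intro a b; unfold shiftNat; split_ifs <;> omega

/-- `zeta i` is the endomorphism `ζ_{i+1}` of the paper: it fixes `q`, `t` and
`x k` for `k < i`, and sends `x k` to `x (k+1)` for `k ≥ i` (0-indexed). -/
def zeta (i : ℕ) : F →+* F :=
  subF (Sum.map id (shiftNat i)) (Function.injective_id.sumMap (shiftNat_inj i))

/-- `zetaP i j` is `ζ_{i+1,j+1}` of the paper. -/
def zetaP (i j : ℕ) : F →+* F := (zeta (max i j)).comp (zeta (min i j))

/-- The Hall–Littlewood polynomial `P_λ(x; t)` in `n` variables. -/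
def HL (n : ℕ) (lam : Fin n → ℕ) : F :=
  ∑ σ : Equiv.Perm (Fin n), pact n σ
    ((∏ i : Fin n, x i.val ^ lam i) *
      ∏ i : Fin n, ∏ j ∈ Finset.Ioi i, (x i.val - t * x j.val) / (x i.val - x j.val))

/-- `ρ_n`, 0-indexed: `rho n i = n - 1 - i`. -/
def rho (n : ℕ) : Fin n → ℕ := fun i => n - 1 - i.val

/-- The deformed Weyl denominator `Δ_n(c) = ∏_{i<j} (x_i - c x_j)`. -/
def DeltaQ (n : ℕ) (c : F) : F := ∏ i : Fin n, ∏ j ∈ Finset.Ioi i, (x i.val - c * x j.val)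

/-- The Schur polynomial `s_λ(x) = Σ_σ σ(x^{λ+ρ}/Δ_n)`. -/
def Schur (n : ℕ) (lam : Fin n → ℕ) : F :=
  ∑ σ : Equiv.Perm (Fin n), pact n σ
    ((∏ i : Fin n, x i.val ^ (lam i + rho n i)) / DeltaQ n 1)

/-- `GT2 n α` is the set of tuples `μ` of length `n` with `α_{i+1} ≤ μ_i ≤ α_i`. -/
def GT2 (n : ℕ) (α : Fin (n+1) → ℕ) : Finset (Fin n → ℕ) :=
  Fintype.piFinset (fun i => Finset.Icc (α i.succ) (α i.castSucc))

def GLw (y a : ℕ) : F := if y = a then -q else if y + 1 = a then t else 0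

def GRw (y b : ℕ) : F := if y = b then 1 else if y = b + 1 then -q * t else 0

/-- `w(μ_j)` where `a1 = α_j`, `a2 = α_{j+1}`, `m = μ_j`. -/
def wgt (a1 a2 m : ℕ) : F :=
  (if m = a1 ∨ m = a2 then 0 else (1 - q) * (1 - t)) + GLw m a1 + GRw m a2

/-- The tridiagonal determinant `M(α; μ)`. -/
def Mdet (n : ℕ) (α : Fin (n+1) → ℕ) (μ : Fin n → ℕ) : F :=
  Matrix.det (Matrix.of fun i j : Fin n =>
    if i = j then wgt (α i.castSucc) (α i.succ) (μ i)
    else if (i : ℕ) + 1 = (j : ℕ) then 1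
    else if (j : ℕ) + 1 = (i : ℕ) then GRw (μ j) (α i.castSucc) * GLw (μ i) (α i.castSucc)
    else 0)

def tot {n : ℕ} (f : Fin n → ℕ) : ℕ := ∑ i, f i


/-- Extend a tuple `Fin n → ℕ` by zero to all of `ℕ`. -/
def pad {n : ℕ} (f : Fin n → ℕ) : ℕ → ℕ := fun k => if h : k < n then f ⟨k, h⟩ else 0

/-- `Ω(α)`: the smallest set of tuples containing `α` and closed under the
elementary raising moves `(β_i, β_{i+1}) ↦ (β_i - 1, β_{i+1} + 1)` whenever
`β_i = β_{i+1} + 2`. -/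
inductive Omega : {k : ℕ} → (Fin k → ℕ) → (Fin k → ℕ) → Prop
  | base {k : ℕ} (α : Fin k → ℕ) : Omega α α
  | step {k : ℕ} (α β : Fin k → ℕ) (i : ℕ) (hi : i + 1 < k) (hb : Omega α β)
      (h2 : β ⟨i, by omega⟩ = β ⟨i + 1, hi⟩ + 2) :
      Omega α (Function.update (Function.update β ⟨i, by omega⟩ (β ⟨i, by omega⟩ - 1))
        ⟨i + 1, hi⟩ (β ⟨i + 1, hi⟩ + 1))

/-- `l(β) = Σ_{i=1}^{k-1} ((α_1 + ⋯ + α_i) - (β_1 + ⋯ + β_i))`. -/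
def ell {k : ℕ} (α β : Fin k → ℕ) : ℤ :=
  ∑ i ∈ Finset.range (k - 1),
    ((∑ j ∈ Finset.range (i + 1), (pad α j : ℤ)) - ∑ j ∈ Finset.range (i + 1), (pad β j : ℤ))

/-! Write `P_μ = ∑_σ σ (x^μ G)` with `G = ∏_{i<j} (x_i - t x_j) / (x_i - x_j)`. If
`μ_a = μ_{a+1} + 1` and `s` is the transposition `(a a+1)`, then
`x^(μ ∘ s) G + s (x^(μ ∘ s) G) = t (x^μ G + s (x^μ G))`, because `s` moves only the factor `(a, a+1)`
of `G`; symmetrizing over `S_n` gives `P_{μ ∘ s} = t P_μ`. An elementary raising move on `β` at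
`(i, i+1)` with `β_i = β_{i+1} + 2` is exactly such a transposition of `β - ρ_n`, and it raises
`l(β)` by one, so the theorem follows by induction on `Ω(α)`. -/

lemma subF_algebraMap (g : Fin 2 ⊕ ℕ → Fin 2 ⊕ ℕ) (hg : Function.Injective g) (p : Rr) :
    subF g hg (algebraMap Rr F p) = algebraMap Rr F (rename g p) :=
  IsFractionRing.lift_algebraMap _ _

lemma subF_comp (g h : Fin 2 ⊕ ℕ → Fin 2 ⊕ ℕ) (hg : Function.Injective g)
    (hh : Function.Injective h) :
    (subF g hg).comp (subF h hh) = subF (g ∘ h) (hg.comp hh) :=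
  IsLocalization.ringHom_ext (nonZeroDivisors Rr) <| RingHom.ext fun p => by
    simp only [RingHom.comp_apply, subF_algebraMap, rename_rename]

lemma permNat_mul (n : ℕ) (σ τ : Equiv.Perm (Fin n)) :
    permNat n (σ * τ) = permNat n σ ∘ permNat n τ := by
  funext k
  by_cases hk : k < n <;> simp [permNat, hk]

lemma pact_mul (n : ℕ) (σ τ : Equiv.Perm (Fin n)) :
    pact n (σ * τ) = (pact n σ).comp (pact n τ) := by
  unfold pact
  rw [subF_comp]
  congr 1
  rw [permNat_mul, Sum.map_comp_map]
  rfl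

lemma pact_x (n : ℕ) (σ : Equiv.Perm (Fin n)) (k : Fin n) :
    pact n σ (x k) = x (σ k) := by
  simp [pact, x, subF_algebraMap, permNat]

lemma pact_t (n : ℕ) (σ : Equiv.Perm (Fin n)) : pact n σ t = t := by
  simp [pact, t, subF_algebraMap]

lemma pact_prod_x_pow (n : ℕ) (μ : Fin n → ℕ) (σ : Equiv.Perm (Fin n)) :
    pact n σ (∏ i : Fin n, x i ^ μ i) = ∏ i : Fin n, x i ^ μ (σ.symm i) := by
  simp only [map_prod, map_pow, pact_x]
  exact Fintype.prod_equiv σ _ _ fun i => by simp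

lemma sum_pact_pact (n : ℕ) (s : Equiv.Perm (Fin n)) (z : F) :
    ∑ σ : Equiv.Perm (Fin n), pact n σ (pact n s z) = ∑ σ : Equiv.Perm (Fin n), pact n σ z := by
  simp only [← RingHom.comp_apply, ← pact_mul]
  exact Fintype.sum_equiv (Equiv.mulRight s) _ _ fun σ => rfl

/-- By `sum_pact_pact`, the hypothesis symmetrizes to twice the conclusion. -/
lemma sum_pact_eq_mul_of_add_pact {n : ℕ} (s : Equiv.Perm (Fin n)) {c w z : F}
    (hc : ∀ σ, pact n σ c = c) (h : w + pact n s w = c * (z + pact n s z)) :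
    ∑ σ : Equiv.Perm (Fin n), pact n σ w = c * ∑ σ : Equiv.Perm (Fin n), pact n σ z := by
  have hsum := congrArg (fun y => ∑ σ : Equiv.Perm (Fin n), pact n σ y) h
  simp only [map_add, map_mul, hc, Finset.sum_add_distrib, ← Finset.mul_sum,
    sum_pact_pact] at hsum
  exact mul_left_cancel₀ (two_ne_zero (α := F)) (by linear_combination hsum)

lemma algebraMap_ne_zero_of_eval_ne_zero {p : Rr} (v : Fin 2 ⊕ ℕ → ℚ) (h : eval v p ≠ 0) :
    algebraMap Rr F p ≠ 0 := by
  rw [Ne, IsFractionRing.to_map_eq_zero_iff]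
  rintro rfl
  exact h (map_zero _)

lemma t_ne_zero : t ≠ 0 :=
  algebraMap_ne_zero_of_eval_ne_zero (fun _ => 1) (by simp)

lemma x_ne_zero (k : ℕ) : x k ≠ 0 :=
  algebraMap_ne_zero_of_eval_ne_zero (fun _ => 1) (by simp)

lemma x_sub_x_ne_zero {i j : ℕ} (h : i ≠ j) : x i - x j ≠ 0 := by
  rw [x, x, ← map_sub]
  exact algebraMap_ne_zero_of_eval_ne_zero (fun v => if v = Sum.inr i then 1 else 0)
    (by simp [Ne.symm h])

lemma x_sub_t_mul_x_ne_zero (i j : ℕ) : x i - t * x j ≠ 0 := by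
  rw [x, x, t, ← map_mul, ← map_sub]
  exact algebraMap_ne_zero_of_eval_ne_zero (fun v => if v = Sum.inr i then 1 else 0) (by simp)

lemma prod_Ioi_eq_prod_filter_lt {M : Type*} [CommMonoid M] {n : ℕ} (f : Fin n → Fin n → M) :
    ∏ i : Fin n, ∏ j ∈ Ioi i, f i j = ∏ p ∈ univ.filter (fun p : Fin n × Fin n => p.1 < p.2),
      f p.1 p.2 := by
  rw [prod_filter, Fintype.prod_prod_type]
  refine prod_congr rfl fun i _ => ?_
  rw [← filter_lt_eq_Ioi, prod_filter]

lemma swap_lt_swap_of_lt {n : ℕ} {a b u v : Fin n} (hab : (a : ℕ) + 1 = b) (huv : u < v)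
    (hne : (u, v) ≠ (a, b)) : Equiv.swap a b u < Equiv.swap a b v := by
  simp only [Ne, Prod.mk.injEq, not_and] at hne
  rw [Equiv.swap_apply_def, Equiv.swap_apply_def]
  split_ifs <;> simp only [Fin.lt_def, Fin.ext_iff] at * <;> omega

lemma prod_Ioi_swap_mul {M : Type*} [CommMonoid M] {n : ℕ} (f : Fin n → Fin n → M)
    {a b : Fin n} (hab : (a : ℕ) + 1 = b) :
    (∏ i : Fin n, ∏ j ∈ Ioi i, f (Equiv.swap a b i) (Equiv.swap a b j)) * f a b
      = (∏ i : Fin n, ∏ j ∈ Ioi i, f i j) * f b a := by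
  set P := univ.filter (fun p : Fin n × Fin n => p.1 < p.2)
  have hlt : a < b := Fin.lt_def.2 (by omega)
  have hab' : (a, b) ∈ P := by simpa [P] using hlt
  have hP : ∀ p ∈ P.erase (a, b), (Equiv.swap a b p.1, Equiv.swap a b p.2) ∈ P.erase (a, b) := by
    rintro ⟨u, v⟩ hp
    simp only [P, mem_erase, mem_filter, mem_univ, true_and] at hp ⊢
    refine ⟨?_, swap_lt_swap_of_lt hab hp.2 hp.1⟩
    intro h
    obtain ⟨hu, hv⟩ := Prod.ext_iff.1 h
    have hu' : u = b := by simpa using congrArg (Equiv.swap a b) hu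
    have hv' : v = a := by simpa using congrArg (Equiv.swap a b) hv
    exact absurd hlt (hu' ▸ hv' ▸ hp.2).asymm
  have hrest : ∏ p ∈ P.erase (a, b), f (Equiv.swap a b p.1) (Equiv.swap a b p.2)
      = ∏ p ∈ P.erase (a, b), f p.1 p.2 :=
    prod_nbij' (fun p => (Equiv.swap a b p.1, Equiv.swap a b p.2))
      (fun p => (Equiv.swap a b p.1, Equiv.swap a b p.2)) hP hP (by simp) (by simp) (fun _ _ => rfl)
  rw [prod_Ioi_eq_prod_filter_lt, prod_Ioi_eq_prod_filter_lt, ← mul_prod_erase P _ hab',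
    ← mul_prod_erase P _ hab', hrest]
  simp only [Equiv.swap_apply_left, Equiv.swap_apply_right]
  ac_rfl

lemma prod_x_pow_comp_swap_mul {n : ℕ} (μ : Fin n → ℕ) {a b : Fin n} (hne : a ≠ b)
    (hm : μ a = μ b + 1) :
    (∏ i : Fin n, x i ^ (μ ∘ Equiv.swap a b) i) * x a = (∏ i : Fin n, x i ^ μ i) * x b := by
  have hsplit : ∀ κ : Fin n → ℕ, ∏ i : Fin n, x i ^ κ i
      = (∏ i ∈ univ \ {a, b}, x i ^ κ i) * (x a ^ κ a * x b ^ κ b) := fun κ => by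
    rw [← prod_sdiff (subset_univ {a, b}), prod_pair hne]
  have hrest : ∏ i ∈ univ \ {a, b}, x i ^ (μ ∘ Equiv.swap a b) i = ∏ i ∈ univ \ {a, b}, x i ^ μ i :=
    prod_congr rfl fun i hi => by
      simp only [mem_sdiff, mem_insert, mem_singleton, not_or] at hi
      rw [Function.comp_apply, Equiv.swap_apply_of_ne_of_ne hi.2.1 hi.2.2]
  rw [hsplit, hsplit, hrest]
  simp only [Function.comp_apply, Equiv.swap_apply_left, Equiv.swap_apply_right, hm]
  ring

def hlTerm (n : ℕ) (μ : Fin n → ℕ) : F :=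
  (∏ i : Fin n, x i ^ μ i) * ∏ i : Fin n, ∏ j ∈ Ioi i, (x i - t * x j) / (x i - x j)

lemma HL_eq_sum_pact_hlTerm (n : ℕ) (μ : Fin n → ℕ) :
    HL n μ = ∑ σ : Equiv.Perm (Fin n), pact n σ (hlTerm n μ) := rfl

/-- Only the factor `g a b` of `∏_{i<j} g i j`, `g i j = (x_i - t x_j) / (x_i - x_j)`, is moved by
`s = (a b)`, and `x^(μ ∘ s) x_a = x^μ x_b`; the identity then reduces to
`x_b g a b + x_a g b a = t (x_a + x_b) = t (x_a g a b + x_b g b a)`. -/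
lemma hlTerm_comp_swap_add {n : ℕ} (μ : Fin n → ℕ) {a b : Fin n} (hab : (a : ℕ) + 1 = b)
    (hm : μ a = μ b + 1) :
    hlTerm n (μ ∘ Equiv.swap a b) + pact n (Equiv.swap a b) (hlTerm n (μ ∘ Equiv.swap a b))
      = t * (hlTerm n μ + pact n (Equiv.swap a b) (hlTerm n μ)) := by
  have hne : a ≠ b := Fin.ne_of_val_ne (by omega)
  unfold hlTerm
  set s := Equiv.swap a b
  set G := ∏ i : Fin n, ∏ j ∈ Ioi i, (x i - t * x j) / (x i - x j)
  have hG : pact n s G * ((x a - t * x b) / (x a - x b)) = G * ((x b - t * x a) / (x b - x a)) := by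
    have := prod_Ioi_swap_mul (fun i j : Fin n => (x i - t * x j) / (x i - x j)) hab
    simp only [G, map_prod, map_div₀, map_sub, map_mul, pact_x, pact_t]
    exact this
  have hM : pact n s (∏ i : Fin n, x i ^ μ i) = ∏ i : Fin n, x i ^ (μ ∘ s) i := by
    rw [pact_prod_x_pow, Equiv.symm_swap]
    rfl
  have hN : pact n s (∏ i : Fin n, x i ^ (μ ∘ s) i) = ∏ i : Fin n, x i ^ μ i := by
    simp only [pact_prod_x_pow, s, Equiv.symm_swap, Function.comp_apply, Equiv.swap_apply_self]
  have hNM := prod_x_pow_comp_swap_mul μ hne hm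
  have hA := x_ne_zero a
  have hAB := x_sub_x_ne_zero (Fin.val_ne_of_ne hne)
  have hAtB := x_sub_t_mul_x_ne_zero a b
  have hsG := eq_div_of_mul_eq (div_ne_zero hAtB hAB) hG
  have hN' : ∏ i : Fin n, x i ^ (μ ∘ s) i = (∏ i : Fin n, x i ^ μ i) * x b / x a := by
    rw [eq_div_iff hA, hNM]
  rw [map_mul, map_mul, hM, hN, hsG, hN']
  have hBA : x b - x a ≠ 0 := sub_ne_zero.2 (sub_ne_zero.1 hAB).symm
  rw [mul_comm t] at hAtB
  field_simp
  ring

lemma HL_comp_swap {n : ℕ} (μ : Fin n → ℕ) {a b : Fin n} (hab : (a : ℕ) + 1 = b)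
    (hm : μ a = μ b + 1) : HL n (μ ∘ Equiv.swap a b) = t * HL n μ := by
  rw [HL_eq_sum_pact_hlTerm, HL_eq_sum_pact_hlTerm]
  exact sum_pact_eq_mul_of_add_pact _ (pact_t n) (hlTerm_comp_swap_add μ hab hm)

/-- The elementary raising move of `Omega.step`, at positions `a` and `b`. -/
def raiseMove {n : ℕ} (β : Fin n → ℕ) (a b : Fin n) : Fin n → ℕ :=
  Function.update (Function.update β a (β a - 1)) b (β b + 1)

lemma raiseMove_apply {n : ℕ} (β : Fin n → ℕ) {a b : Fin n} (hne : a ≠ b) (j : Fin n) :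
    raiseMove β a b j = if j = b then β b + 1 else if j = a then β a - 1 else β j := by
  by_cases hjb : j = b
  · simp [raiseMove, hjb]
  · by_cases hja : j = a
    · simp [raiseMove, hja, hne]
    · simp [raiseMove, hja, hjb]

/-- Moving one unit from position `a` to `a + 1` lowers exactly one partial sum, the `a`-th. -/
lemma ell_raiseMove {n : ℕ} (α β : Fin n → ℕ) {a b : Fin n} (hab : (a : ℕ) + 1 = b)
    (ha : 1 ≤ β a) : ell α (raiseMove β a b) = ell α β + 1 := by
  have hne : a ≠ b := Fin.ne_of_val_ne (by omega)
  let e : ℕ → ℤ := fun j => if j = b then 1 else 0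
  have hpad : ∀ j, (pad (raiseMove β a b) j : ℤ) = pad β j + (e j - e (j + 1)) := by
    intro j
    by_cases hj : j < n
    · simp only [pad, hj, dite_true, raiseMove_apply β hne, e]
      by_cases hjb : j = b <;> by_cases hja : j = a <;>
        simp_all [Fin.ext_iff] <;> omega
    · simp only [pad, hj, dite_false, e]
      split_ifs <;> omega
  have hprefix : ∀ m, ∑ j ∈ range (m + 1), (pad (raiseMove β a b) j : ℤ)
      = ∑ j ∈ range (m + 1), (pad β j : ℤ) - if m = a then 1 else 0 := by
    intro m
    simp only [hpad, sum_add_distrib, sum_range_sub', e]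
    split_ifs <;> omega
  have hcount : ∑ m ∈ range (n - 1), (if m = (a : ℕ) then (1 : ℤ) else 0) = 1 := by
    rw [sum_ite_eq', if_pos (mem_range.2 (by omega))]
  simp only [ell, hprefix, sub_sub_eq_add_sub, add_sub_right_comm _ _ (∑ j ∈ range _, _),
    sum_add_distrib, hcount]

lemma rho_eq_rho_add_one {n : ℕ} {a b : Fin n} (hab : (a : ℕ) + 1 = b) :
    rho n a = rho n b + 1 := by
  simp only [rho]
  omega

lemma rho_le_raiseMove {n : ℕ} {β : Fin n → ℕ} (hρ : ∀ j, rho n j ≤ β j) {a b : Fin n}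
    (hab : (a : ℕ) + 1 = b) (h2 : β a = β b + 2) (j : Fin n) :
    rho n j ≤ raiseMove β a b j := by
  have := rho_eq_rho_add_one hab
  have := hρ b
  rw [raiseMove_apply β (Fin.ne_of_val_ne (by omega))]
  split_ifs with hjb hja
  · subst hjb; omega
  · subst hja; omega
  · exact hρ j

lemma raiseMove_sub_rho {n : ℕ} {β : Fin n → ℕ} (hρ : ∀ j, rho n j ≤ β j) {a b : Fin n}
    (hab : (a : ℕ) + 1 = b) (h2 : β a = β b + 2) :
    (fun j => raiseMove β a b j - rho n j) = (fun j => β j - rho n j) ∘ Equiv.swap a b := by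
  have hne : a ≠ b := Fin.ne_of_val_ne (by omega)
  have := rho_eq_rho_add_one hab
  have := hρ b
  funext j
  rw [raiseMove_apply β hne, Function.comp_apply]
  rcases eq_or_ne j a with rfl | hja
  · rw [if_neg hne, if_pos rfl, Equiv.swap_apply_left]
    omega
  · rcases eq_or_ne j b with rfl | hjb
    · rw [if_pos rfl, Equiv.swap_apply_right]
      omega
    · rw [if_neg hjb, if_neg hja, Equiv.swap_apply_of_ne_of_ne hja hjb]

theorem raising_operator_identity_general (n : ℕ) (lam : Fin n → ℕ)
    (β : Fin n → ℕ) (hβ : Omega (fun i => lam i + rho n i) β) :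
    (∀ i : Fin n, rho n i ≤ β i) ∧
      HL n (fun i => β i - rho n i) =
        t ^ ell (fun i => lam i + rho n i) β * HL n lam := by
  generalize hα : (fun i => lam i + rho n i) = α at hβ ⊢
  induction hβ with
  | base =>
    subst hα
    refine ⟨fun i => Nat.le_add_left _ _, ?_⟩
    simp [ell]
  | step β i hi _ h2 ih =>
    obtain ⟨hρ, hHL⟩ := ih
    set a : Fin n := ⟨i, by omega⟩
    set b : Fin n := ⟨i + 1, hi⟩
    have hab : (a : ℕ) + 1 = b := rfl
    have hm : β a - rho n a = β b - rho n b + 1 := by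
      have := rho_eq_rho_add_one hab
      have := hρ b
      omega
    refine ⟨rho_le_raiseMove hρ hab h2, ?_⟩
    change HL n (fun j => raiseMove β a b j - rho n j) = t ^ ell α (raiseMove β a b) * HL n lam
    rw [raiseMove_sub_rho hρ hab h2, HL_comp_swap _ hab hm, hHL, ell_raiseMove α β hab (by omega),
      zpow_add_one₀ t_ne_zero]
    ring

/-- **Proposition 5 (raising operators).** If `λ` is weakly decreasing of length `n`,
`α = λ + ρ_n` and `β ∈ Ω(α)`, then every entry of `β - ρ_n` is a nonnegative integer
and `P_{β-ρ_n}(x;t) = t^{l(β)} ⬝ P_λ(x;t)`. -/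
theorem raising_operator_identity (n : ℕ) (lam : Fin n → ℕ)
    (hlam : ∀ i j : Fin n, i ≤ j → lam j ≤ lam i)
    (β : Fin n → ℕ) (hβ : Omega (fun i => lam i + rho n i) β) :
    (∀ i : Fin n, rho n i ≤ β i) ∧
      HL n (fun i => β i - rho n i) =
        t ^ ell (fun i => lam i + rho n i) β * HL n lam :=
  raising_operator_identity_general n lam β hβ

end
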